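/- arXiv:1707.06677 — 4 statements merged into one kernel-verified Lean document; each statement's English description precedes it below -/
import Mathlib

section
/- Let g(z) = ∑_{n=1}^∞ c_n z^{-n} ∈ ℚ((z^{-1})) be a Laurent series all of whose continued fraction partial quotients are linear (equivalently, the denominator q_k(z) of the k-th convergent has degree exactly k). Then the k-th convergent p_k/q_k can be represented with integer polynomial numerator and denominator satisfying h(q_k) ≤ (‖c_{≤2k+1}‖_∞² · k)^{k/2} and h(p_k) ≤ ‖c_{≤2k+1}‖_∞^{k+1} · k^{(k+2)/2}, where h denotes the maximum absolute value of coefficients and ‖c_{≤m}‖_∞ = max_{1≤i≤m} |c_i|. -/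
/-!
The coefficients of `q_k` solve the homogeneous `k × (k + 1)` Hankel system
`∑ⱼ qⱼ c_{i+j} = 0` (`1 ≤ i ≤ k`), which says that `q_k g` has no `z⁻¹, …, z⁻ᵏ` terms. By Cramer's
rule the signed maximal minors of this system form an integral solution, and its leading entry
`± det H_k` is nonzero, so `deg q_k = k`. Every minor is a `k × k` determinant with entries
bounded by `M`, so Hadamard's inequality bounds it by `(√k M)ᵏ`. The numerator `p_k`, the
polynomial part of `q_k g`, has coefficients that are sums of at most `k` products `qⱼ cₘ`.
-/

open Matrix Finset Polynomial

namespace Matrix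

theorem abs_det_le_prod_norm_row {n : ℕ} (A : Matrix (Fin n) (Fin n) ℝ) :
    |A.det| ≤ ∏ i, ‖WithLp.toLp 2 (A i)‖ := by
  let b := EuclideanSpace.basisFun (Fin n) ℝ
  have : Fact (Module.finrank ℝ (EuclideanSpace ℝ (Fin n)) = n) := ⟨finrank_euclideanSpace_fin⟩
  have h := b.toBasis.orientation.abs_volumeForm_apply_le fun i => WithLp.toLp 2 (A i)
  have hb : b.toBasis.toMatrix (fun i => WithLp.toLp 2 (A i)) = Aᵀ := by
    ext; simp [b, Module.Basis.toMatrix_apply]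
  rwa [Orientation.volumeForm_robust' _ b, Module.Basis.det_apply, hb, det_transpose] at h

theorem abs_det_le_of_forall_abs_le {n : ℕ} (A : Matrix (Fin n) (Fin n) ℝ) {M : ℝ}
    (hA : ∀ i j, |A i j| ≤ M) : |A.det| ≤ (M ^ 2 * n) ^ ((n : ℝ) / 2) := by
  have hrow : ∀ i, ‖WithLp.toLp 2 (A i)‖ ≤ √(M ^ 2 * n) := fun i => by
    rw [EuclideanSpace.norm_eq]
    refine Real.sqrt_le_sqrt ?_
    calc ∑ j, ‖A i j‖ ^ 2 ≤ ∑ _j : Fin n, M ^ 2 :=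
          sum_le_sum fun j _ => sq_le_sq.mpr <| by simpa using (hA i j).trans (le_abs_self M)
      _ = M ^ 2 * n := by simp [mul_comm]
  calc |A.det| ≤ ∏ i, ‖WithLp.toLp 2 (A i)‖ := abs_det_le_prod_norm_row A
    _ ≤ ∏ _i : Fin n, √(M ^ 2 * n) := prod_le_prod (fun _ _ => norm_nonneg _) fun i _ => hrow i
    _ = (M ^ 2 * n) ^ ((n : ℝ) / 2) := by
      rw [prod_const, card_univ, Fintype.card_fin, Real.sqrt_eq_rpow, ← Real.rpow_natCast,
        ← Real.rpow_mul (by positivity), one_div_mul_eq_div]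

variable {R : Type*} [CommRing R] {k : ℕ}

def signedMaximalMinors (v : Fin k → Fin (k + 1) → R) : Fin (k + 1) → R :=
  fun j => (-1) ^ (j : ℕ) * (of fun i j' => v i (j.succAbove j')).det

theorem dotProduct_signedMaximalMinors (v : Fin k → Fin (k + 1) → R) (r : Fin (k + 1) → R) :
    r ⬝ᵥ signedMaximalMinors v = (of (vecCons r v)).det := by
  rw [det_succ_row_zero]
  refine sum_congr rfl fun j _ => ?_
  simp only [signedMaximalMinors, submatrix, of_apply, cons_val_zero, cons_val_succ]
  ring

theorem dotProduct_signedMaximalMinors_self (v : Fin k → Fin (k + 1) → R) (i : Fin k) :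
    v i ⬝ᵥ signedMaximalMinors v = 0 := by
  rw [dotProduct_signedMaximalMinors]
  exact det_zero_of_row_eq (Fin.succ_ne_zero i).symm (funext fun _ => by simp)

end Matrix

section Convergent

variable {R : Type*} [CommRing R] [DecidableEq R] (c : ℕ → R) (k : ℕ)

def hankelRows : Fin k → Fin (k + 1) → R := fun i j => c (i + 1 + j)

noncomputable def convergentDenom : R[X] :=
  ofFn (k + 1) (signedMaximalMinors (hankelRows c k))

noncomputable def convergentNumer : R[X] :=
  ofFn k fun i => ∑ j ∈ Icc (i.1 + 1) k, (convergentDenom c k).coeff j * c (j - i)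

theorem sum_coeff_convergentDenom_mul_eq_zero {i : ℕ} (hi : 1 ≤ i) (hik : i ≤ k) :
    ∑ j ∈ range (k + 1), (convergentDenom c k).coeff j * c (i + j) = 0 := by
  rw [← dotProduct_signedMaximalMinors_self (hankelRows c k) ⟨i - 1, by omega⟩, dotProduct,
    ← Fin.sum_univ_eq_sum_range]
  refine sum_congr rfl fun j _ => ?_
  rw [convergentDenom, ofFn_coeff_eq_val_of_lt _ j.2, hankelRows, Nat.sub_add_cancel hi, mul_comm]

theorem coeff_convergentDenom_self :
    (convergentDenom c k).coeff k = (-1) ^ k * (of fun i i' : Fin k => c (i + i' + 1)).det := by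
  rw [convergentDenom, ofFn_coeff_eq_val_of_lt _ k.lt_succ_self]
  have hlast : (⟨k, k.lt_succ_self⟩ : Fin (k + 1)) = Fin.last k := rfl
  simp only [signedMaximalMinors, hlast, Fin.succAbove_last, hankelRows,
    Fin.val_castSucc, add_right_comm]

theorem degree_convergentDenom (hH : (of fun i i' : Fin k => c (i + i' + 1)).det ≠ 0) :
    (convergentDenom c k).degree = k := by
  refine degree_eq_of_le_of_coeff_ne_zero
    (degree_le_of_natDegree_le (Nat.lt_succ_iff.mp (ofFn_natDegree_lt (by omega) _))) ?_
  rwa [coeff_convergentDenom_self, ne_eq, ((isUnit_neg_one (α := R)).pow k).mul_right_eq_zero]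

theorem coeff_convergentNumer (i : ℕ) :
    (convergentNumer c k).coeff i =
      ∑ j ∈ Icc (i + 1) k, (convergentDenom c k).coeff j * c (j - i) := by
  rcases lt_or_ge i k with hi | hi
  · exact ofFn_coeff_eq_val_of_lt _ hi
  · rw [convergentNumer, ofFn_coeff_eq_zero_of_ge _ hi, Icc_eq_empty (by omega), sum_empty]

end Convergent

section Heights

variable (c : ℕ → ℤ) (k : ℕ) {M : ℝ}

theorem abs_coeff_convergentDenom_le (hM : ∀ i, 1 ≤ i → i ≤ 2 * k → |(c i : ℝ)| ≤ M) (j : ℕ) :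
    |((convergentDenom c k).coeff j : ℝ)| ≤ (M ^ 2 * k) ^ ((k : ℝ) / 2) := by
  rcases lt_or_ge j (k + 1) with hj | hj
  · rw [convergentDenom, ofFn_coeff_eq_val_of_lt _ hj, signedMaximalMinors, Int.cast_mul,
      Int.cast_det, abs_mul]
    simp only [Int.cast_pow, Int.cast_neg, Int.cast_one, abs_pow, abs_neg, abs_one, one_pow,
      one_mul]
    refine abs_det_le_of_forall_abs_le _ fun i i' => hM _ (by omega) ?_
    have := (Fin.succAbove ⟨j, hj⟩ i').2
    omega
  · rw [convergentDenom, ofFn_coeff_eq_zero_of_ge _ hj, Int.cast_zero, abs_zero]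
    positivity

theorem abs_coeff_convergentNumer_le (hM0 : 0 ≤ M)
    (hM : ∀ i, 1 ≤ i → i ≤ 2 * k → |(c i : ℝ)| ≤ M) (i : ℕ) :
    |((convergentNumer c k).coeff i : ℝ)| ≤ M ^ (k + 1) * (k : ℝ) ^ (((k : ℝ) + 2) / 2) := by
  set B := (M ^ 2 * k) ^ ((k : ℝ) / 2) with hB_def
  have hB : B = M ^ k * (k : ℝ) ^ ((k : ℝ) / 2) := by
    rw [hB_def, Real.mul_rpow (by positivity) k.cast_nonneg, ← Real.rpow_natCast M 2,
      ← Real.rpow_mul hM0, ← Real.rpow_natCast M k]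
    congr 2
    push_cast
    ring
  have hcard : ((Icc (i + 1) k).card : ℝ) ≤ k := by
    rw [Nat.card_Icc]
    exact_mod_cast (by omega : k + 1 - (i + 1) ≤ k)
  rw [coeff_convergentNumer, Int.cast_sum]
  calc |∑ j ∈ Icc (i + 1) k, (((convergentDenom c k).coeff j * c (j - i) : ℤ) : ℝ)|
      ≤ ∑ j ∈ Icc (i + 1) k, B * M := by
        refine (abs_sum_le_sum_abs _ _).trans (sum_le_sum fun j hj => ?_)
        rw [mem_Icc] at hj
        rw [Int.cast_mul, abs_mul]
        exact mul_le_mul (abs_coeff_convergentDenom_le c k hM j) (hM _ (by omega) (by omega))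
          (abs_nonneg _) (by positivity)
    _ ≤ k * (B * M) := by
        rw [sum_const, nsmul_eq_mul]
        gcongr
    _ = M ^ (k + 1) * (k : ℝ) ^ (((k : ℝ) + 2) / 2) := by
        rw [add_div, div_self two_ne_zero, Real.rpow_add' k.cast_nonneg (by positivity),
          Real.rpow_one, hB]
        ring

end Heights

theorem integer_convergent_height_bounds_general
    (k : ℕ) (c : ℕ → ℤ)
    (hH : ∀ j : ℕ, (Matrix.of fun i i' : Fin j => (c (i.1 + i'.1 + 1) : ℚ)).det ≠ 0)
    (M : ℝ) (hM : ∀ i : ℕ, 1 ≤ i → i ≤ 2 * k + 1 → (|c i| : ℝ) ≤ M) :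
    ∃ p q : Polynomial ℤ,
      q.degree = k ∧
      (∀ i : ℕ, 1 ≤ i → i ≤ k →
        ∑ j ∈ Finset.range (k + 1), q.coeff j * c (i + j) = 0) ∧
      (∀ i : ℕ, p.coeff i = ∑ j ∈ Finset.Icc (i + 1) k, q.coeff j * c (j - i)) ∧
      (∀ j : ℕ, (|q.coeff j| : ℝ) ≤ (M ^ 2 * k) ^ ((k : ℝ) / 2)) ∧
      (∀ j : ℕ, (|p.coeff j| : ℝ) ≤ M ^ (k + 1) * (k : ℝ) ^ (((k : ℝ) + 2) / 2)) := by
  have hHk : (of fun i i' : Fin k => c (i + i' + 1)).det ≠ 0 := fun h =>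
    hH k (by rw [← map_zero (Int.castRingHom ℚ), ← h, RingHom.map_det]; rfl)
  have hM' : ∀ i, 1 ≤ i → i ≤ 2 * k → |(c i : ℝ)| ≤ M := fun i hi hik => hM i hi (by omega)
  have hM0 : 0 ≤ M := (abs_nonneg _).trans (hM 1 le_rfl (by omega))
  exact ⟨convergentNumer c k, convergentDenom c k, degree_convergentDenom c k hHk,
    fun _ => sum_coeff_convergentDenom_mul_eq_zero c k, coeff_convergentNumer c k,
    abs_coeff_convergentDenom_le c k hM', abs_coeff_convergentNumer_le c k hM0 hM'⟩

/-- Let `g(z) = ∑_{n≥1} c_n z^{-n}` (integer coefficients) be a Laurent series all of whose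
continued-fraction partial quotients are linear; equivalently (as used in the paper) all
Hankel matrices `H_j = (c_{i+i'+1})_{0≤i,i'<j}` are invertible, so the denominator of the
`k`-th convergent has degree exactly `k`.  Then the `k`-th convergent `p_k/q_k` can be
represented with integer polynomials (`q` of degree `k`; being the `k`-th convergent is
expressed by the vanishing of the coefficients of `z^{-1},…,z^{-k}` in `q·g - p`, with `p`
the polynomial part of `q·g`) whose heights satisfy
`h(q_k) ≤ (‖c_{≤2k+1}‖_∞² k)^{k/2}` and `h(p_k) ≤ ‖c_{≤2k+1}‖_∞^{k+1} k^{(k+2)/2}`,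
for any bound `M ≥ max_{1≤i≤2k+1} |c_i|`. -/
theorem integer_convergent_height_bounds
    (k : ℕ) (hk : 1 ≤ k) (c : ℕ → ℤ)
    (hH : ∀ j : ℕ, (Matrix.of fun i i' : Fin j => (c (i.1 + i'.1 + 1) : ℚ)).det ≠ 0)
    (M : ℝ) (hM : ∀ i : ℕ, 1 ≤ i → i ≤ 2 * k + 1 → (|c i| : ℝ) ≤ M) :
    ∃ p q : Polynomial ℤ,
      q.degree = k ∧
      (∀ i : ℕ, 1 ≤ i → i ≤ k →
        ∑ j ∈ Finset.range (k + 1), q.coeff j * c (i + j) = 0) ∧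
      (∀ i : ℕ, p.coeff i = ∑ j ∈ Finset.Icc (i + 1) k, q.coeff j * c (j - i)) ∧
      (∀ j : ℕ, (|q.coeff j| : ℝ) ≤ (M ^ 2 * k) ^ ((k : ℝ) / 2)) ∧
      (∀ j : ℕ, (|p.coeff j| : ℝ) ≤ M ^ (k + 1) * (k : ℝ) ^ (((k : ℝ) + 2) / 2)) :=
  integer_convergent_height_bounds_general k c hH M hM
end

section
/- Let g(z) = ∑_{n=1}^∞ c_n z^{-n} ∈ ℚ((z^{-1})). A reduced rational function p(z)/q(z) with deg q(z) = k is a convergent of g(z) if and only if the Hankel matrix H_k = (c_{i+j-1})_{1≤i,j≤k} is invertible, and in that case the coefficient vector of q(z) solves H_{k+1} a = c · e_{k+1} for some nonzero constant c. -/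
/-!
Put `X = z⁻¹`. Multiplying by `z⁻ᵏ` turns `q(z) g(z) - p(z) = O(z^{-k-1})` into the divisibility
`X^{2k+1} ∣ q̃ G - p̃` in `K⟦X⟧`, where `G` is `g` written in `X` and `q̃, p̃` are the reflections
of `q, p`. A nonzero kernel vector of `H_k` is a nonzero polynomial `W` with `deg W < k` for which
`W g` has no terms in `z⁻¹, …, z⁻ᵏ`. Two such approximations of `g` can be cross-multiplied, and a
common factor of `p` and `q` can be cancelled because its reflection is a unit in `K⟦X⟧`.
-/

open Polynomial Finset
open scoped PowerSeries Matrix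

namespace Polynomial

variable {R : Type*} [CommRing R]

theorem natDegree_reflect_le_of_le {f : R[X]} {N : ℕ} (h : f.natDegree ≤ N) :
    (f.reflect N).natDegree ≤ N :=
  natDegree_reflect_le.trans (max_le le_rfl h)

theorem eq_zero_of_X_pow_dvd_coe {F : R[X]} {n : ℕ} (hF : F.natDegree < n)
    (h : (PowerSeries.X : R⟦X⟧) ^ n ∣ F) : F = 0 := by
  ext m
  rcases lt_or_ge m n with hm | hm
  · simpa using PowerSeries.X_pow_dvd_iff.1 h m hm
  · exact coeff_eq_zero_of_natDegree_lt (by omega)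

theorem isUnit_coe_reflect_natDegree {f : R[X]} (hf : IsUnit f.leadingCoeff) :
    IsUnit ((f.reflect f.natDegree : R[X]) : R⟦X⟧) := by
  rw [PowerSeries.isUnit_iff_constantCoeff, constantCoeff_coe]
  exact (coeff_zero_reverse f).symm ▸ hf

/-- Two fractions `B / A` and `D / C`, with `deg A, deg B ≤ N` and `deg C, deg D ≤ M`, that agree
with a series `S` in `z⁻¹` up to order `z^{-N-M-1}` are equal. -/
theorem mul_eq_mul_of_X_pow_dvd {A B C D : R[X]} {N M : ℕ} (S : R⟦X⟧)
    (hA : A.natDegree ≤ N) (hB : B.natDegree ≤ N) (hC : C.natDegree ≤ M) (hD : D.natDegree ≤ M)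
    (hAB : (PowerSeries.X : R⟦X⟧) ^ (N + M + 1) ∣ (A.reflect N : R⟦X⟧) * S - B.reflect N)
    (hCD : (PowerSeries.X : R⟦X⟧) ^ (N + M + 1) ∣ (C.reflect M : R⟦X⟧) * S - D.reflect M) :
    A * D = C * B := by
  have hdvd : (PowerSeries.X : R⟦X⟧) ^ (N + M + 1) ∣
      ((A.reflect N * D.reflect M - C.reflect M * B.reflect N : R[X]) : R⟦X⟧) := by
    have : ((A.reflect N * D.reflect M - C.reflect M * B.reflect N : R[X]) : R⟦X⟧) =
        (C.reflect M : R⟦X⟧) * ((A.reflect N : R⟦X⟧) * S - B.reflect N) -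
          (A.reflect N : R⟦X⟧) * ((C.reflect M : R⟦X⟧) * S - D.reflect M) := by
      push_cast; ring
    rw [this]
    exact dvd_sub (dvd_mul_of_dvd_right hAB _) (dvd_mul_of_dvd_right hCD _)
  have hrA := natDegree_reflect_le_of_le hA
  have hrB := natDegree_reflect_le_of_le hB
  have hrC := natDegree_reflect_le_of_le hC
  have hrD := natDegree_reflect_le_of_le hD
  have hdeg : (A.reflect N * D.reflect M - C.reflect M * B.reflect N).natDegree < N + M + 1 :=
    (natDegree_sub_le _ _).trans_lt (max_lt (natDegree_mul_le.trans_lt (by omega))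
      (natDegree_mul_le.trans_lt (by omega)))
  have h0 := congrArg (reflect (N + M)) (sub_eq_zero.1 (eq_zero_of_X_pow_dvd_coe hdeg hdvd))
  rwa [reflect_mul _ _ hrA hrD, add_comm N M, reflect_mul _ _ hrC hrB, reflect_reflect,
    reflect_reflect, reflect_reflect, reflect_reflect] at h0

end Polynomial

variable {K : Type*} [Field K]

/-- `g = ∑_{n ≥ 1} c n z⁻ⁿ`, as a power series in `X = z⁻¹`. -/
noncomputable def tailSeries (c : ℕ → K) : K⟦X⟧ :=
  PowerSeries.mk fun n => if n = 0 then 0 else c n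

/-- The coefficient of `z⁻ⁱ` in `A(z) g(z)`, for `i ≥ 1`. -/
noncomputable def tailCoeff (c : ℕ → K) (A : K[X]) (i : ℕ) : K :=
  A.sum fun j a => a * c (i + j)

theorem coeff_tailSeries (c : ℕ → K) (n : ℕ) :
    PowerSeries.coeff n (tailSeries c) = if n = 0 then 0 else c n :=
  PowerSeries.coeff_mk _ _

theorem tailCoeff_eq_sum_range (c : ℕ → K) {A : K[X]} {n : ℕ} (hA : A.natDegree < n) (i : ℕ) :
    tailCoeff c A i = ∑ j ∈ range n, A.coeff j * c (i + j) :=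
  sum_over_range' A (f := fun j a => a * c (i + j)) (fun _ => zero_mul _) n hA

theorem tailCoeff_add (c : ℕ → K) (A B : K[X]) (i : ℕ) :
    tailCoeff c (A + B) i = tailCoeff c A i + tailCoeff c B i :=
  sum_add_index _ _ _ (fun _ => zero_mul _) fun _ _ _ => add_mul _ _ _

theorem tailCoeff_X_pow (c : ℕ → K) (k i : ℕ) : tailCoeff c (X ^ k) i = c (i + k) := by
  rw [tailCoeff, X_pow_eq_monomial,
    sum_monomial_index _ (fun j (a : K) => a * c (i + j)) (zero_mul _), one_mul]

theorem coeff_reflect_mul_tailSeries (c : ℕ → K) {A : K[X]} {N : ℕ} (hA : A.natDegree ≤ N)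
    (t : ℕ) :
    PowerSeries.coeff t ((A.reflect N : K⟦X⟧) * tailSeries c) =
      ∑ j ∈ range (N + 1), A.coeff j * PowerSeries.coeff (t + j - N) (tailSeries c) := by
  set f : ℕ → K := fun a => A.coeff (revAt N a) * PowerSeries.coeff (t - a) (tailSeries c)
  have hf_gt_t : ∀ a, t < a → f a = 0 := fun a ha => by
    simp [f, coeff_tailSeries, Nat.sub_eq_zero_of_le ha.le]
  have hf_gt_N : ∀ a, N < a → f a = 0 := fun a ha => by
    simp [f, revAt_eq_self_of_lt ha, coeff_eq_zero_of_natDegree_lt (hA.trans_lt ha)]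
  have hsub (n : ℕ) (hn : n ≤ t + N + 1) (hvanish : ∀ a, n ≤ a → f a = 0) :
      ∑ a ∈ range n, f a = ∑ a ∈ range (t + N + 1), f a :=
    sum_subset (range_subset_range.2 hn) fun a _ ha => hvanish a (by simpa using ha)
  rw [PowerSeries.coeff_mul, Nat.sum_antidiagonal_eq_sum_range_succ_mk]
  simp only [coeff_coe, coeff_reflect]
  rw [hsub (t + 1) (by omega) fun a ha => hf_gt_t a (by omega),
    ← hsub (N + 1) (by omega) fun a ha => hf_gt_N a (by omega), ← sum_range_reflect]
  refine sum_congr rfl fun j hj => ?_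
  have hj : j ≤ N := Nat.lt_succ_iff.1 (mem_range.1 hj)
  simp only [f, add_tsub_cancel_right, revAt_le (Nat.sub_le N j), Nat.sub_sub_self hj]
  rw [show t - (N - j) = t + j - N by omega]

theorem coeff_add_reflect_mul_tailSeries (c : ℕ → K) {A : K[X]} {N : ℕ} (hA : A.natDegree ≤ N)
    {i : ℕ} (hi : 1 ≤ i) :
    PowerSeries.coeff (N + i) ((A.reflect N : K⟦X⟧) * tailSeries c) = tailCoeff c A i := by
  rw [coeff_reflect_mul_tailSeries c hA, tailCoeff_eq_sum_range c (Nat.lt_succ_of_le hA)]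
  refine sum_congr rfl fun j _ => ?_
  rw [coeff_tailSeries, if_neg (by omega), show N + i + j - N = i + j by omega]

theorem coeff_sub_reflect_mul_tailSeries (c : ℕ → K) {A : K[X]} {N : ℕ} (hA : A.natDegree ≤ N)
    {i : ℕ} (hi : i ≤ N) :
    PowerSeries.coeff (N - i) ((A.reflect N : K⟦X⟧) * tailSeries c) =
      ∑ j ∈ Icc (i + 1) N, A.coeff j * c (j - i) := by
  rw [coeff_reflect_mul_tailSeries c hA]
  symm
  refine sum_subset_zero_on_sdiff (fun j hj => ?_) (fun j hj => ?_) (fun j hj => ?_)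
  · simp only [mem_Icc, mem_range] at hj ⊢; omega
  · simp only [mem_sdiff, mem_Icc, mem_range] at hj
    rw [coeff_tailSeries, if_pos (by omega), mul_zero]
  · simp only [mem_Icc] at hj
    rw [coeff_tailSeries, if_neg (by omega), show N - i + j - N = j - i by omega]

/-- In the variable `z⁻¹`: `A(z) g(z) - B(z) = O(z^{-m-1})` iff `B` is the polynomial part of
`A g` and the coefficients of `z⁻¹, …, z⁻ᵐ` in `A g` vanish. -/
theorem X_pow_dvd_reflect_mul_tailSeries_sub_iff (c : ℕ → K) {A B : K[X]} {N : ℕ}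
    (hA : A.natDegree ≤ N) (hB : B.natDegree ≤ N) (m : ℕ) :
    (PowerSeries.X : K⟦X⟧) ^ (N + m + 1) ∣ (A.reflect N : K⟦X⟧) * tailSeries c - B.reflect N ↔
      (∀ i, B.coeff i = ∑ j ∈ Icc (i + 1) N, A.coeff j * c (j - i)) ∧
        ∀ i, 1 ≤ i → i ≤ m → tailCoeff c A i = 0 := by
  have hlow (i : ℕ) (hi : i ≤ N) : PowerSeries.coeff (N - i) (B.reflect N : K⟦X⟧) = B.coeff i := by
    rw [coeff_coe, coeff_reflect, revAt_le (Nat.sub_le N i), Nat.sub_sub_self hi]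
  have hhigh (i : ℕ) (hi : 1 ≤ i) : PowerSeries.coeff (N + i) (B.reflect N : K⟦X⟧) = 0 := by
    rw [coeff_coe, coeff_reflect, revAt_eq_self_of_lt (by omega),
      coeff_eq_zero_of_natDegree_lt (by omega)]
  have hpart (i : ℕ) (hi : N < i) : B.coeff i = ∑ j ∈ Icc (i + 1) N, A.coeff j * c (j - i) := by
    rw [coeff_eq_zero_of_natDegree_lt (by omega), Icc_eq_empty (by omega), sum_empty]
  simp only [PowerSeries.X_pow_dvd_iff, map_sub, sub_eq_zero]
  constructor
  · intro h
    refine ⟨fun i => ?_, fun i hi him => ?_⟩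
    · rcases le_or_gt i N with hi | hi
      · rw [← hlow i hi, ← h (N - i) (by omega), coeff_sub_reflect_mul_tailSeries c hA hi]
      · exact hpart i hi
    · rw [← coeff_add_reflect_mul_tailSeries c hA hi, h (N + i) (by omega), hhigh i hi]
  · rintro ⟨hpoly, htail⟩ t ht
    rcases le_or_gt t N with htN | htN
    · obtain ⟨i, hi, rfl⟩ : ∃ i ≤ N, t = N - i := ⟨N - t, by omega, by omega⟩
      rw [coeff_sub_reflect_mul_tailSeries c hA hi, hlow i hi, hpoly]
    · obtain ⟨i, hi, rfl⟩ : ∃ i, 1 ≤ i ∧ t = N + i := ⟨t - N, by omega, by omega⟩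
      rw [coeff_add_reflect_mul_tailSeries c hA hi, hhigh i hi, htail i hi (by omega)]

theorem natDegree_le_of_coeff_eq_sum_Icc {B : K[X]} {N : ℕ} {f : ℕ → ℕ → K}
    (h : ∀ i, B.coeff i = ∑ j ∈ Icc (i + 1) N, f i j) : B.natDegree ≤ N :=
  natDegree_le_iff_coeff_eq_zero.2 fun i hi => by
    rw [h, Icc_eq_empty (by omega), sum_empty]

theorem exists_coeff_eq_sum_Icc (N : ℕ) (f : ℕ → ℕ → K) :
    ∃ B : K[X], ∀ i, B.coeff i = ∑ j ∈ Icc (i + 1) N, f i j := by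
  refine ⟨∑ i ∈ range N, monomial i (∑ j ∈ Icc (i + 1) N, f i j), fun i => ?_⟩
  rw [finsetSum_coeff]
  simp only [coeff_monomial, sum_ite_eq', mem_range]
  split_ifs with hi
  · rfl
  · rw [Icc_eq_empty (by omega), sum_empty]

/-- The Hankel matrix `H_n = (c (i + j - 1))_{1 ≤ i, j ≤ n}`, indexed from `0`. -/
def hankel (c : ℕ → K) (n : ℕ) : Matrix (Fin n) (Fin n) K :=
  Matrix.of fun i j => c (i + j + 1)

theorem hankel_mulVec_coeff (c : ℕ → K) {A : K[X]} {n : ℕ} (hA : A.degree < n) (i : Fin n) :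
    (hankel c n *ᵥ fun j => A.coeff j) i = tailCoeff c A (i + 1) := by
  rw [tailCoeff, ← sum_fin (fun j (a : K) => a * c (i + 1 + j)) (by simp) hA]
  simp only [hankel, Matrix.mulVec, dotProduct, Matrix.of_apply]
  exact Finset.sum_congr rfl fun j _ => by rw [mul_comm, add_right_comm]

theorem hankel_det_eq_zero_iff (c : ℕ → K) (n : ℕ) :
    (hankel c n).det = 0 ↔
      ∃ A : K[X], A ≠ 0 ∧ A.natDegree < n ∧ ∀ i, 1 ≤ i → i ≤ n → tailCoeff c A i = 0 := by
  rw [← Matrix.exists_mulVec_eq_zero_iff]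
  constructor
  · rintro ⟨v, hv, hHv⟩
    set A := (degreeLTEquiv K n).symm v
    have hcoeff : (fun j : Fin n => (A : K[X]).coeff j) = v :=
      (degreeLTEquiv K n).apply_symm_apply v
    have hA0 : (A : K[X]) ≠ 0 := fun h => hv (by rw [← hcoeff, h]; rfl)
    refine ⟨A, hA0, (natDegree_lt_iff_degree_lt hA0).2 (mem_degreeLT.1 A.2), fun i hi hin => ?_⟩
    have := hankel_mulVec_coeff c (mem_degreeLT.1 A.2) ⟨i - 1, by omega⟩
    rwa [hcoeff, hHv, Pi.zero_apply, eq_comm, Nat.sub_add_cancel hi] at this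
  · rintro ⟨A, hA0, hdeg, htail⟩
    refine ⟨fun j => A.coeff j, fun h => ?_, funext fun i => ?_⟩
    · exact leadingCoeff_ne_zero.2 hA0 (congrFun h ⟨_, hdeg⟩)
    · rw [hankel_mulVec_coeff c ((natDegree_lt_iff_degree_lt hA0).1 hdeg),
        htail _ (by omega) i.2, Pi.zero_apply]

/-- Legendre's criterion in coefficients, for `deg q ≤ k`: the coefficients of `z⁻¹, …, z⁻ᵏ`
in `q g` vanish, and `p` is the polynomial part of `q g`. -/
def IsLegendreApprox (c : ℕ → K) (k : ℕ) (p q : K[X]) : Prop :=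
  (∀ i, 1 ≤ i → i ≤ k → ∑ j ∈ range (k + 1), q.coeff j * c (i + j) = 0) ∧
    ∀ i, p.coeff i = ∑ j ∈ Icc (i + 1) k, q.coeff j * c (j - i)

namespace IsLegendreApprox

variable {c : ℕ → K} {k : ℕ} {p q : K[X]}

theorem natDegree_le (h : IsLegendreApprox c k p q) : p.natDegree ≤ k :=
  natDegree_le_of_coeff_eq_sum_Icc h.2

theorem tailCoeff_eq_zero (h : IsLegendreApprox c k p q) (hq : q.natDegree ≤ k) {i : ℕ}
    (hi : 1 ≤ i) (hik : i ≤ k) : tailCoeff c q i = 0 := by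
  rw [tailCoeff_eq_sum_range c (Nat.lt_succ_of_le hq), h.1 i hi hik]

theorem X_pow_dvd (h : IsLegendreApprox c k p q) (hq : q.natDegree ≤ k) :
    (PowerSeries.X : K⟦X⟧) ^ (2 * k + 1) ∣ (q.reflect k : K⟦X⟧) * tailSeries c - p.reflect k := by
  rw [two_mul]
  exact (X_pow_dvd_reflect_mul_tailSeries_sub_iff c hq h.natDegree_le k).2
    ⟨h.2, fun _ => h.tailCoeff_eq_zero hq⟩

/-- A kernel vector `W` of `H_k` gives a second approximation `B / W` of `g`; cross-multiplying,
`q ∣ W p`, so `q ∣ W`, which is impossible as `deg W < k`. -/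
theorem hankel_det_ne_zero (h : IsLegendreApprox c k p q) (hq : q.degree = k)
    (hpq : IsCoprime p q) : (hankel c k).det ≠ 0 := by
  have hqk : q.natDegree = k := natDegree_eq_of_degree_eq_some hq
  intro hdet
  obtain ⟨W, hW0, hWk, hWtail⟩ := (hankel_det_eq_zero_iff c k).1 hdet
  obtain ⟨B, hB⟩ := exists_coeff_eq_sum_Icc W.natDegree fun i j => W.coeff j * c (j - i)
  have hWB : (PowerSeries.X : K⟦X⟧) ^ (k + W.natDegree + 1) ∣
      (W.reflect W.natDegree : K⟦X⟧) * tailSeries c - B.reflect W.natDegree := by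
    rw [add_comm k]
    exact (X_pow_dvd_reflect_mul_tailSeries_sub_iff c le_rfl
      (natDegree_le_of_coeff_eq_sum_Icc hB) k).2 ⟨hB, hWtail⟩
  have hqp : (PowerSeries.X : K⟦X⟧) ^ (k + W.natDegree + 1) ∣
      (q.reflect k : K⟦X⟧) * tailSeries c - p.reflect k :=
    (pow_dvd_pow _ (by omega)).trans (h.X_pow_dvd hqk.le)
  have hcross : q * B = W * p := mul_eq_mul_of_X_pow_dvd _ hqk.le h.natDegree_le le_rfl
    (natDegree_le_of_coeff_eq_sum_Icc hB) hqp hWB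
  have hqW : q ∣ W := hpq.symm.dvd_of_dvd_mul_right ⟨B, hcross.symm⟩
  exact (natDegree_le_of_dvd hqW hW0).not_gt (hqk ▸ hWk)

/-- Cancelling a common factor `d` of `p` and `q` leaves the approximation `(p / d) / (q / d)`
of `g` of the same order, so `q / d`, of degree `< k`, is a kernel vector of `H_k`. -/
theorem isCoprime (h : IsLegendreApprox c k p q) (hq : q.degree = k)
    (hdet : (hankel c k).det ≠ 0) : IsCoprime p q := by
  have hq0 : q ≠ 0 := ne_zero_of_coe_le_degree hq.ge
  have hqk : q.natDegree = k := natDegree_eq_of_degree_eq_some hq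
  refine EuclideanDomain.isCoprime_of_dvd (fun h0 => hq0 h0.2) fun d hdu hd0 hdp hdq => ?_
  obtain ⟨q', rfl⟩ := hdq
  obtain ⟨p', rfl⟩ := hdp
  have hq'0 : q' ≠ 0 := right_ne_zero_of_mul hq0
  have hdpos : 0 < d.natDegree :=
    natDegree_pos_iff_degree_pos.2 (degree_pos_of_ne_zero_of_nonunit hd0 hdu)
  have hdeg : d.natDegree + q'.natDegree = k := by rw [← natDegree_mul hd0 hq'0, hqk]
  have hp' : p'.natDegree ≤ q'.natDegree := by
    rcases eq_or_ne p' 0 with rfl | hp'0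
    · simp
    · have := h.natDegree_le
      rw [natDegree_mul hd0 hp'0] at this
      omega
  have hdvd : (PowerSeries.X : K⟦X⟧) ^ (q'.natDegree + (2 * d.natDegree + q'.natDegree) + 1) ∣
      (q'.reflect q'.natDegree : K⟦X⟧) * tailSeries c - p'.reflect q'.natDegree := by
    have hdq := h.X_pow_dvd hqk.le
    rw [← hdeg, reflect_mul d q' le_rfl le_rfl, reflect_mul d p' le_rfl hp', Polynomial.coe_mul,
      Polynomial.coe_mul, mul_assoc, ← mul_sub,
      (isUnit_coe_reflect_natDegree (leadingCoeff_ne_zero.2 hd0).isUnit).dvd_mul_left] at hdq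
    convert hdq using 2
    ring
  obtain ⟨-, htail⟩ := (X_pow_dvd_reflect_mul_tailSeries_sub_iff c le_rfl hp' _).1 hdvd
  exact hdet ((hankel_det_eq_zero_iff c k).2
    ⟨q', hq'0, by omega, fun i hi hik => htail i hi (by omega)⟩)

end IsLegendreApprox

theorem exists_isLegendreApprox_of_hankel_det_ne_zero {c : ℕ → K} {k : ℕ}
    (hdet : (hankel c k).det ≠ 0) : ∃ p q : K[X], q.degree = k ∧ IsLegendreApprox c k p q := by
  obtain ⟨v, hv⟩ := Matrix.mulVec_surjective_iff_isUnit.2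
    ((Matrix.isUnit_iff_isUnit_det _).2 hdet.isUnit) fun i : Fin k => -c (k + i + 1)
  set A : K[X] := ((degreeLTEquiv K k).symm v : K[X])
  have hA : A.degree < k := mem_degreeLT.1 ((degreeLTEquiv K k).symm v).2
  have hAv : (fun j : Fin k => A.coeff j) = v := (degreeLTEquiv K k).apply_symm_apply v
  set q : K[X] := X ^ k + A
  have hq : q.degree = k := by
    rw [degree_add_eq_left_of_degree_lt (by rwa [degree_X_pow]), degree_X_pow]
  have hqtail (i : ℕ) (hi : 1 ≤ i) (hik : i ≤ k) : tailCoeff c q i = 0 := by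
    have hrow := hankel_mulVec_coeff c hA ⟨i - 1, by omega⟩
    rw [hAv, hv, Nat.sub_add_cancel hi] at hrow
    rw [tailCoeff_add, tailCoeff_X_pow, ← hrow]
    simp only [show k + (i - 1) + 1 = i + k by omega, add_neg_cancel]
  obtain ⟨p, hp⟩ := exists_coeff_eq_sum_Icc k fun i j => q.coeff j * c (j - i)
  refine ⟨p, q, hq, fun i hi hik => ?_, hp⟩
  rw [← tailCoeff_eq_sum_range c (natDegree_eq_of_degree_eq_some hq ▸ Nat.lt_succ_self k),
    hqtail i hi hik]

theorem exists_hankel_succ_mulVec_eq_single {c : ℕ → K} {k : ℕ} {q : K[X]} (hq : q.degree = k)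
    (htail : ∀ i, 1 ≤ i → i ≤ k → tailCoeff c q i = 0) (hdet : (hankel c (k + 1)).det ≠ 0) :
    ∃ c₀ : K, c₀ ≠ 0 ∧ (hankel c (k + 1) *ᵥ fun j => q.coeff j) = Pi.single (Fin.last k) c₀ := by
  have hq0 : q ≠ 0 := ne_zero_of_coe_le_degree hq.ge
  have hqk : q.natDegree = k := natDegree_eq_of_degree_eq_some hq
  have hqlt : q.degree < (k + 1 : ℕ) := hq ▸ WithBot.coe_lt_coe.2 (Nat.lt_succ_self k)
  refine ⟨tailCoeff c q (k + 1), fun h0 => hdet ((hankel_det_eq_zero_iff c (k + 1)).2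
    ⟨q, hq0, by omega, fun i hi hik => ?_⟩), funext fun i => ?_⟩
  · rcases hik.lt_or_eq with hik | rfl
    · exact htail i hi (by omega)
    · exact h0
  · rw [hankel_mulVec_coeff c hqlt, Pi.single_apply]
    split_ifs with hi
    · rw [hi, Fin.val_last]
    · exact htail _ (by omega) (Fin.val_lt_last hi)

theorem convergent_iff_hankel_invertible_general
    (k : ℕ) (c : ℕ → ℚ) :
    ((∃ p q : Polynomial ℚ,
        q.degree = k ∧ IsCoprime p q ∧
        (∀ i : ℕ, 1 ≤ i → i ≤ k →
          ∑ j ∈ Finset.range (k + 1), q.coeff j * c (i + j) = 0) ∧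
        (∀ i : ℕ, p.coeff i = ∑ j ∈ Finset.Icc (i + 1) k, q.coeff j * c (j - i))) ↔
      (Matrix.of fun i j : Fin k => c (i.1 + j.1 + 1)).det ≠ 0) ∧
    (∀ p q : Polynomial ℚ,
      q.degree = k → IsCoprime p q →
      (∀ i : ℕ, 1 ≤ i → i ≤ k →
        ∑ j ∈ Finset.range (k + 1), q.coeff j * c (i + j) = 0) →
      (∀ i : ℕ, p.coeff i = ∑ j ∈ Finset.Icc (i + 1) k, q.coeff j * c (j - i)) →
      (Matrix.of fun i j : Fin (k + 1) => c (i.1 + j.1 + 1)).det ≠ 0 →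
      ∃ c₀ : ℚ, c₀ ≠ 0 ∧
        ∀ i : Fin (k + 1),
          ∑ j : Fin (k + 1), c (i.1 + j.1 + 1) * q.coeff j.1 =
            if i = Fin.last k then c₀ else 0) := by
  refine ⟨⟨fun ⟨p, q, hq, hpq, h⟩ => IsLegendreApprox.hankel_det_ne_zero h hq hpq,
    fun hdet => ?_⟩, fun p q hq _ h₁ h₂ hdet => ?_⟩
  · obtain ⟨p, q, hq, h⟩ := exists_isLegendreApprox_of_hankel_det_ne_zero hdet
    exact ⟨p, q, hq, h.isCoprime hq hdet, h⟩
  · have h : IsLegendreApprox c k p q := ⟨h₁, h₂⟩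
    have hqk : q.natDegree ≤ k := natDegree_le_of_degree_le hq.le
    obtain ⟨c₀, hc₀, hH⟩ :=
      exists_hankel_succ_mulVec_eq_single hq (fun _ => h.tailCoeff_eq_zero hqk) hdet
    exact ⟨c₀, hc₀, fun i => (congrFun hH i).trans (Pi.single_apply _ _ _)⟩

/-- Let `g(z) = ∑_{n≥1} c_n z^{-n} ∈ ℚ((z^{-1}))`.  A reduced rational function `p/q` with
`deg q = k` is a convergent of `g` (by Legendre's theorem this is expressed by the vanishing
of the coefficients of `z^{-1},…,z^{-k}` in `q·g - p`, with `p` the polynomial part of `q·g`)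
if and only if the Hankel matrix `H_k = (c_{i+j-1})_{1≤i,j≤k}` is invertible; and in that case
(given that `H_{k+1}` is also invertible, as holds in the setting of the paper) the
coefficient vector `a` of `q` solves `H_{k+1} a = c₀ · e_{k+1}` for some nonzero constant
`c₀`. -/
theorem convergent_iff_hankel_invertible
    (k : ℕ) (hk : 1 ≤ k) (c : ℕ → ℚ) :
    ((∃ p q : Polynomial ℚ,
        q.degree = k ∧ IsCoprime p q ∧
        (∀ i : ℕ, 1 ≤ i → i ≤ k →
          ∑ j ∈ Finset.range (k + 1), q.coeff j * c (i + j) = 0) ∧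
        (∀ i : ℕ, p.coeff i = ∑ j ∈ Finset.Icc (i + 1) k, q.coeff j * c (j - i))) ↔
      (Matrix.of fun i j : Fin k => c (i.1 + j.1 + 1)).det ≠ 0) ∧
    (∀ p q : Polynomial ℚ,
      q.degree = k → IsCoprime p q →
      (∀ i : ℕ, 1 ≤ i → i ≤ k →
        ∑ j ∈ Finset.range (k + 1), q.coeff j * c (i + j) = 0) →
      (∀ i : ℕ, p.coeff i = ∑ j ∈ Finset.Icc (i + 1) k, q.coeff j * c (j - i)) →
      (Matrix.of fun i j : Fin (k + 1) => c (i.1 + j.1 + 1)).det ≠ 0 →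
      ∃ c₀ : ℚ, c₀ ≠ 0 ∧
        ∀ i : Fin (k + 1),
          ∑ j : Fin (k + 1), c (i.1 + j.1 + 1) * q.coeff j.1 =
            if i = Fin.last k then c₀ else 0) :=
  convergent_iff_hankel_invertible_general k c
end

section
/- With the notation above, the leading tail coefficient α_{k,k+1} equals det H_{k+1}, the determinant of the (k+1)×(k+1) Hankel matrix of g(z); in particular, if all partial quotients of g are linear then α_{k,k+1} is a nonzero integer (when c_n ∈ ℤ). -/
/-! Row `i` of `A * cramer A eᵢ = det A • eᵢ`, read off for the last row of a Hankel matrix,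
whose entries are exactly the coefficients `c_{k+1+j}` of the tail. -/

theorem Matrix.sum_mul_det_updateCol_single {n R : Type*} [Fintype n] [DecidableEq n]
    [CommRing R] (A : Matrix n n R) (i : n) :
    ∑ j, A i j * (A.updateCol j (Pi.single i 1)).det = A.det := by
  have h := congrFun (Matrix.mulVec_cramer A (Pi.single i 1)) i
  simpa only [Matrix.mulVec, dotProduct, Matrix.cramer_apply, Pi.smul_apply,
    Pi.single_eq_same, smul_eq_mul, mul_one] using h

/-- With `q_k(z) = ∑_{j=0}^k a_j z^j` chosen via Cramer's rule (so that
`a_j = Δ_{k+1,j}` is the determinant of the Hankel matrix `H_{k+1} = (c_{i+j+1})` with the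
`j`-th column replaced by `e_{k+1}`), the leading tail coefficient
`α_{k,k+1} = ∑_{j=0}^k a_j c_{k+1+j}` equals `det H_{k+1}`; in particular, if all partial
quotients of `g` are linear (so `det H_{k+1} ≠ 0`), then `α_{k,k+1}` is a nonzero
integer. -/
theorem leading_tail_coefficient_eq_hankel_det
    (k : ℕ) (c : ℕ → ℤ)
    (H : Matrix (Fin (k + 1)) (Fin (k + 1)) ℤ)
    (hHdef : H = Matrix.of fun i j : Fin (k + 1) => c (i.1 + j.1 + 1))
    (a : Fin (k + 1) → ℤ)
    (ha : ∀ j : Fin (k + 1),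
      a j = (H.updateCol j (Pi.single (Fin.last k) 1)).det) :
    (∑ j : Fin (k + 1), a j * c (k + 1 + j.1)) = H.det ∧
    (H.det ≠ 0 → (∑ j : Fin (k + 1), a j * c (k + 1 + j.1)) ≠ 0) := by
  have last_row (j : Fin (k + 1)) : H (Fin.last k) j = c (k + 1 + j.1) := by
    rw [hHdef, Matrix.of_apply, Fin.val_last, add_right_comm]
  have tail_eq_det : ∑ j : Fin (k + 1), a j * c (k + 1 + j.1) = H.det := by
    rw [← H.sum_mul_det_updateCol_single (Fin.last k)]
    exact Finset.sum_congr rfl fun j _ => by rw [ha j, last_row, mul_comm]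
  exact ⟨tail_eq_det, fun hdet => tail_eq_det ▸ hdet⟩
end

section
/- Let g(z) = g(z^d)/P*(z) as above, and let p_k(z)/q_k(z) be the k-th convergent of g(z) with deg q_k = k. Define q_{k,m}(z) := q_k(z^{d^m}) and p_{k,m}(z) := ∏_{t=0}^{m-1} P*(z^{d^t}) · p_k(z^{d^m}). Then q_{k,m}(z) g(z) − p_{k,m}(z) = ∏_{t=0}^{m-1} P*(z^{d^t}) · ∑_{i=k+1}^∞ α_{k,i} z^{-d^m · i}, where q_k(z)g(z) − p_k(z) = ∑_{i=k+1}^∞ α_{k,i} z^{-i}. In particular, p_{k,m}(z)/q_{k,m}(z) is again a convergent of g(z). -/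
/-!
Write `g z = z⁻¹ G(z⁻¹)` with `G w = ∏' t, P(w^{d^t})`; the product converges for `0 ≤ w < 1`
because `P(w^{d^t}) - 1 = O(w^t)`. Splitting off its first factor, `G w = P w · G(w^d)`, which is
`g z = P*(z) g(z^d)`; iterating, `g z = Q_m(z) g(z^{d^m})` with `Q_m(z) = ∏_{t<m} P*(z^{d^t})`.
Multiplying the remainder identity for `p_k/q_k` at `x = z^{d^m}` by `Q_m(z)` gives the first claim.
For the second, `|Q_m(z)| ≤ V^m z^{d^m-1}` with `V = ∑ |u_i|`, the remainder is `O(x^{-k-1})` and `|q_k(x)| ≥ x^k/2`,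
so the error times `x^{2k} = z^{2k d^m}` is `O(1/z)`.
-/

open Finset Filter Topology

namespace LacunaryProduct

def P (d : ℕ) (u : ℕ → ℤ) (w : ℝ) : ℝ := ∑ i ∈ range d, (u i : ℝ) * w ^ i

def Pstar (d : ℕ) (u : ℕ → ℤ) (y : ℝ) : ℝ := ∑ i ∈ range d, (u i : ℝ) * y ^ (d - 1 - i)

noncomputable def G (d : ℕ) (u : ℕ → ℤ) (w : ℝ) : ℝ := ∏' t : ℕ, P d u (w ^ d ^ t)

def partialProd (d : ℕ) (u : ℕ → ℤ) (m : ℕ) (z : ℝ) : ℝ := ∏ t ∈ range m, Pstar d u (z ^ d ^ t)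

variable {d : ℕ} {u : ℕ → ℤ}

theorem Pstar_eq_pow_mul_P_inv {y : ℝ} (hy : y ≠ 0) : Pstar d u y = y ^ (d - 1) * P d u y⁻¹ := by
  rw [Pstar, P, mul_sum]
  refine sum_congr rfl fun i hi => ?_
  have hid : d - 1 = (d - 1 - i) + i := by have := mem_range.mp hi; omega
  rw [hid, pow_add, inv_pow, Nat.add_sub_cancel]
  field_simp

theorem abs_P_sub_one_le (hd : 0 < d) (hu0 : u 0 = 1) {w : ℝ} (hw0 : 0 ≤ w) (hw1 : w ≤ 1) :
    |P d u w - 1| ≤ (∑ i ∈ range d, |(u i : ℝ)|) * w := by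
  obtain ⟨e, rfl⟩ : ∃ e, d = e + 1 := ⟨d - 1, by omega⟩
  have hsplit : P (e + 1) u w - 1 = ∑ i ∈ range e, (u (i + 1) : ℝ) * w ^ (i + 1) := by
    simp [P, sum_range_succ', hu0]
  calc |P (e + 1) u w - 1| ≤ ∑ i ∈ range e, |(u (i + 1) : ℝ)| * w := by
        rw [hsplit]
        refine (abs_sum_le_sum_abs _ _).trans (sum_le_sum fun i _ => ?_)
        rw [abs_mul, abs_of_nonneg (pow_nonneg hw0 _)]
        exact mul_le_mul_of_nonneg_left (pow_le_of_le_one hw0 hw1 (by omega)) (abs_nonneg _)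
    _ ≤ (∑ i ∈ range (e + 1), |(u i : ℝ)|) * w := by
        rw [sum_range_succ' (fun i => |(u i : ℝ)|), ← sum_mul]
        exact mul_le_mul_of_nonneg_right (le_add_of_nonneg_right (abs_nonneg _)) hw0

theorem multipliable_P_pow_pow (hd : 2 ≤ d) (hu0 : u 0 = 1) {w : ℝ} (hw0 : 0 ≤ w) (hw1 : w < 1) :
    Multipliable fun t : ℕ => P d u (w ^ d ^ t) := by
  set V := ∑ i ∈ range d, |(u i : ℝ)|
  have hbound (t : ℕ) : ‖P d u (w ^ d ^ t) - 1‖ ≤ V * w ^ t := by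
    rw [Real.norm_eq_abs]
    refine (abs_P_sub_one_le (by omega) hu0 (pow_nonneg hw0 _) (pow_le_one₀ hw0 hw1.le)).trans ?_
    exact mul_le_mul_of_nonneg_left (pow_le_pow_of_le_one hw0 hw1.le (Nat.lt_pow_self hd).le)
      (sum_nonneg fun _ _ => abs_nonneg _)
  have hsum := ((summable_geometric_of_lt_one hw0 hw1).mul_left V).of_norm_bounded hbound
  simpa using Real.multipliable_one_add_of_summable hsum

theorem G_eq_P_mul_G_pow (hd : 2 ≤ d) (hu0 : u 0 = 1) {w : ℝ} (hw0 : 0 ≤ w) (hw1 : w < 1) :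
    G d u w = P d u w * G d u (w ^ d) := by
  have hshift : (fun t : ℕ => P d u (w ^ d ^ (t + 1))) = fun t => P d u ((w ^ d) ^ d ^ t) := by
    funext t; rw [← pow_mul, pow_succ']
  have hmult : Multipliable fun t : ℕ => P d u (w ^ d ^ (t + 1)) := by
    rw [hshift]
    exact multipliable_P_pow_pow hd hu0 (pow_nonneg hw0 _) (pow_lt_one₀ hw0 hw1 (by omega))
  unfold G
  rw [tprod_eq_zero_mul' (f := fun t => P d u (w ^ d ^ t)) hmult, hshift, pow_zero, pow_one]

section FunctionalEquation

variable {g : ℝ → ℝ} (hd : 2 ≤ d) (hu0 : u 0 = 1) (hg : ∀ z, g z = z⁻¹ * G d u z⁻¹)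
include hd hu0 hg

theorem g_eq_Pstar_mul_g_pow {y : ℝ} (hy : 1 < y) : g y = Pstar d u y * g (y ^ d) := by
  have hy0 : y ≠ 0 := by positivity
  rw [hg, hg, G_eq_P_mul_G_pow hd hu0 (by positivity) (inv_lt_one_of_one_lt₀ hy),
    Pstar_eq_pow_mul_P_inv hy0, inv_pow]
  have hpow : y ^ d = y ^ (d - 1) * y := by rw [← pow_succ]; congr 1; omega
  rw [hpow]
  field_simp

theorem g_eq_partialProd_mul_g_pow {z : ℝ} (hz : 1 < z) (m : ℕ) :
    g z = partialProd d u m z * g (z ^ d ^ m) := by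
  induction m with
  | zero => simp [partialProd]
  | succ m ih =>
    rw [ih, g_eq_Pstar_mul_g_pow hd hu0 hg (one_lt_pow₀ hz (by positivity)), partialProd,
      partialProd, prod_range_succ, ← pow_mul, ← pow_succ, mul_assoc]

end FunctionalEquation

theorem abs_Pstar_le {y : ℝ} (hy : 1 ≤ y) :
    |Pstar d u y| ≤ (∑ i ∈ range d, |(u i : ℝ)|) * y ^ (d - 1) := by
  rw [sum_mul]
  refine (abs_sum_le_sum_abs _ _).trans (sum_le_sum fun i _ => ?_)
  rw [abs_mul, abs_of_nonneg (pow_nonneg (zero_le_one.trans hy) _)]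
  exact mul_le_mul_of_nonneg_left (pow_le_pow_right₀ hy (Nat.sub_le _ _)) (abs_nonneg _)

theorem abs_partialProd_mul_le (hd : 0 < d) {z : ℝ} (hz : 1 ≤ z) (m : ℕ) :
    |partialProd d u m z| * z ≤ (∑ i ∈ range d, |(u i : ℝ)|) ^ m * z ^ d ^ m := by
  induction m with
  | zero => simp [partialProd]
  | succ m ih =>
    have hzm : 1 ≤ z ^ d ^ m := one_le_pow₀ hz
    have hzd : (z ^ d ^ m) ^ d = z ^ d ^ m * (z ^ d ^ m) ^ (d - 1) := by
      rw [← pow_succ']; congr 1; omega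
    calc |partialProd d u (m + 1) z| * z
        = |partialProd d u m z| * z * |Pstar d u (z ^ d ^ m)| := by
          rw [partialProd, prod_range_succ, abs_mul, ← partialProd]; ring
      _ ≤ ((∑ i ∈ range d, |(u i : ℝ)|) ^ m * z ^ d ^ m) *
            ((∑ i ∈ range d, |(u i : ℝ)|) * (z ^ d ^ m) ^ (d - 1)) :=
          mul_le_mul ih (abs_Pstar_le hzm) (abs_nonneg _) (by positivity)
      _ = (∑ i ∈ range d, |(u i : ℝ)|) ^ (m + 1) * z ^ d ^ (m + 1) := by
          rw [pow_succ d, pow_mul, hzd]; ring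

end LacunaryProduct

theorem abs_tsum_mul_inv_pow_le {α : ℕ → ℝ} {C r x : ℝ} (hα : ∀ i, |α i| ≤ C * r ^ i)
    (hr : 0 ≤ r) (hx : 2 * r ≤ x) (hx0 : 0 < x) (k : ℕ) :
    |∑' i, α i * x⁻¹ ^ (k + 1 + i)| ≤ 2 * C * x⁻¹ ^ (k + 1) := by
  have hC : 0 ≤ C := by simpa using (abs_nonneg _).trans (hα 0)
  have hρ0 : 0 ≤ r * x⁻¹ := by positivity
  have hρ : r * x⁻¹ ≤ 1 / 2 := by
    rw [← div_eq_mul_inv, div_le_iff₀ hx0]; linarith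
  have hbound (i : ℕ) : ‖α i * x⁻¹ ^ (k + 1 + i)‖ ≤ C * x⁻¹ ^ (k + 1) * (r * x⁻¹) ^ i := by
    rw [Real.norm_eq_abs, abs_mul, abs_of_pos (pow_pos (inv_pos.2 hx0) _), pow_add, mul_pow]
    calc |α i| * (x⁻¹ ^ (k + 1) * x⁻¹ ^ i) ≤ C * r ^ i * (x⁻¹ ^ (k + 1) * x⁻¹ ^ i) :=
          mul_le_mul_of_nonneg_right (hα i) (by positivity)
      _ = C * x⁻¹ ^ (k + 1) * (r ^ i * x⁻¹ ^ i) := by ring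
  have hgeom := (summable_geometric_of_lt_one hρ0 (by linarith)).mul_left (C * x⁻¹ ^ (k + 1))
  calc |∑' i, α i * x⁻¹ ^ (k + 1 + i)|
      ≤ ∑' i, C * x⁻¹ ^ (k + 1) * (r * x⁻¹) ^ i := tsum_of_norm_bounded hgeom.hasSum hbound
    _ = C * x⁻¹ ^ (k + 1) * (1 - r * x⁻¹)⁻¹ := by
        rw [tsum_mul_left, tsum_geometric_of_lt_one hρ0 (by linarith)]
    _ ≤ C * x⁻¹ ^ (k + 1) * 2 := by
        gcongr
        rw [inv_le_comm₀ (by linarith) two_pos]; linarith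
    _ = 2 * C * x⁻¹ ^ (k + 1) := by ring

theorem pow_div_two_le_abs_sum_range_succ {a : ℕ → ℤ} {k : ℕ} (hak : a k ≠ 0) {x : ℝ}
    (hx : 1 ≤ x) (hxa : 2 * ∑ j ∈ range k, |(a j : ℝ)| ≤ x) :
    x ^ k / 2 ≤ |∑ j ∈ range (k + 1), (a j : ℝ) * x ^ j| := by
  have hx0 : 0 < x := by linarith
  have hlead : x ^ k ≤ |(a k : ℝ) * x ^ k| := by
    have hak1 : (1 : ℝ) ≤ |(a k : ℝ)| := by exact_mod_cast Int.one_le_abs hak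
    rw [abs_mul, abs_of_pos (pow_pos hx0 k)]
    exact le_mul_of_one_le_left (pow_pos hx0 k).le hak1
  have hlower : |∑ j ∈ range k, (a j : ℝ) * x ^ j| * x ≤ (∑ j ∈ range k, |(a j : ℝ)|) * x ^ k := by
    rw [sum_mul]
    refine (mul_le_mul_of_nonneg_right (abs_sum_le_sum_abs _ _) hx0.le).trans ?_
    rw [sum_mul]
    refine sum_le_sum fun j hj => ?_
    rw [abs_mul, abs_of_pos (pow_pos hx0 j), mul_assoc, ← pow_succ]
    exact mul_le_mul_of_nonneg_left (pow_le_pow_right₀ hx (mem_range.mp hj)) (abs_nonneg _)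
  have hlow : |∑ j ∈ range k, (a j : ℝ) * x ^ j| ≤ x ^ k / 2 := by
    rw [le_div_iff₀ two_pos]
    nlinarith [pow_pos hx0 k, abs_nonneg (∑ j ∈ range k, (a j : ℝ) * x ^ j)]
  rw [sum_range_succ] at *
  have := abs_sub_abs_le_abs_sub ((a k : ℝ) * x ^ k) (-∑ j ∈ range k, (a j : ℝ) * x ^ j)
  rw [abs_neg, sub_neg_eq_add, add_comm] at this
  linarith

theorem abs_mul_div_mul_pow_le {Q T q x z M C : ℝ} {k : ℕ} (hz : 0 < z) (hx : 0 < x)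
    (hQ : |Q| * z ≤ M * x) (hT : |T| ≤ 2 * C * x⁻¹ ^ (k + 1)) (hq : x ^ k / 2 ≤ |q|) :
    |Q * T / q| * x ^ (2 * k) ≤ 4 * C * M / z := by
  have hq0 : 0 < |q| := lt_of_lt_of_le (by positivity) hq
  have hM : 0 ≤ M := nonneg_of_mul_nonneg_left ((by positivity : 0 ≤ |Q| * z).trans hQ) hx
  have hC : 0 ≤ C := by
    have := nonneg_of_mul_nonneg_left ((abs_nonneg T).trans hT) (by positivity)
    linarith
  have hQ' : |Q| ≤ M * x / z := by rw [le_div_iff₀ hz]; exact hQ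
  calc |Q * T / q| * x ^ (2 * k) = |Q| * |T| / |q| * x ^ (2 * k) := by rw [abs_div, abs_mul]
    _ ≤ M * x / z * (2 * C * x⁻¹ ^ (k + 1)) / (x ^ k / 2) * x ^ (2 * k) := by gcongr
    _ = 4 * C * M / z := by rw [inv_pow]; field_simp; ring

theorem tendsto_abs_sub_div_mul_pow_of_remainder {g Q p : ℝ → ℝ} {a : ℕ → ℤ} {α : ℕ → ℝ}
    {C r V : ℝ} {k n : ℕ} (hn : n ≠ 0) (hak : a k ≠ 0) (hr : 0 ≤ r)
    (hα : ∀ i, |α i| ≤ C * r ^ i) (hQ : ∀ z, 1 ≤ z → |Q z| * z ≤ V * z ^ n)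
    (hremainder : ∀ z, r < z →
      (∑ j ∈ range (k + 1), (a j : ℝ) * (z ^ n) ^ j) * g z - Q z * p z =
        Q z * ∑' i, α i * ((z ^ n)⁻¹) ^ (k + 1 + i)) :
    Tendsto (fun z => |g z - Q z * p z / ∑ j ∈ range (k + 1), (a j : ℝ) * (z ^ n) ^ j| *
      z ^ (2 * (k * n))) atTop (𝓝 0) := by
  set A := ∑ j ∈ range k, |(a j : ℝ)|
  have hA : 0 ≤ A := sum_nonneg fun _ _ => abs_nonneg _
  refine squeeze_zero' ((eventually_ge_atTop 0).mono fun z hz => by positivity)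
    ((eventually_ge_atTop (2 * r + 2 * A + 1)).mono fun z hz => ?_)
    ((tendsto_const_nhds (x := 4 * C * V)).div_atTop tendsto_id)
  dsimp only [id]
  have hz1 : 1 ≤ z := by linarith
  have hx : z ≤ z ^ n := le_self_pow₀ hz1 hn
  have hq := pow_div_two_le_abs_sum_range_succ hak (hz1.trans hx) (by linarith)
  have hq0 : ∑ j ∈ range (k + 1), (a j : ℝ) * (z ^ n) ^ j ≠ 0 := by
    intro h; rw [h, abs_zero] at hq; linarith [pow_pos (by linarith : (0 : ℝ) < z ^ n) k]
  rw [show 2 * (k * n) = n * (2 * k) by ring, pow_mul, sub_div' hq0, mul_comm (g z),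
    hremainder z (by linarith)]
  exact abs_mul_div_mul_pow_le (by linarith) (by linarith) (hQ z hz1)
    (abs_tsum_mul_inv_pow_le hα hr (by linarith) (by linarith) k) hq

open LacunaryProduct

open Filter in
theorem functional_equation_generates_convergents_general
    (d k m : ℕ) (hd : 2 ≤ d)
    (u : ℕ → ℤ) (hu0 : u 0 = 1)
    (g : ℝ → ℝ)
    (hg : ∀ z : ℝ, g z = z⁻¹ * ∏' t : ℕ, ∑ i ∈ Finset.range d, (u i : ℝ) * (z⁻¹ ^ (d ^ t)) ^ i)
    (a b : ℕ → ℤ) (hak : a k ≠ 0)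
    (α : ℕ → ℝ) (C r : ℝ) (hr : 1 ≤ r)
    (hαgrow : ∀ i : ℕ, |α i| ≤ C * r ^ i)
    (hser : ∀ x : ℝ, r < x →
      (∑ j ∈ Finset.range (k + 1), (a j : ℝ) * x ^ j) * g x -
        (∑ i ∈ Finset.range k, (b i : ℝ) * x ^ i) =
      ∑' i : ℕ, α i * (x⁻¹) ^ (k + 1 + i)) :
    (∀ z : ℝ, r < z →
      (∑ j ∈ Finset.range (k + 1), (a j : ℝ) * (z ^ d ^ m) ^ j) * g z -
        (∏ t ∈ Finset.range m, ∑ i ∈ Finset.range d, (u i : ℝ) * (z ^ d ^ t) ^ (d - 1 - i)) *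
          (∑ i ∈ Finset.range k, (b i : ℝ) * (z ^ d ^ m) ^ i) =
      (∏ t ∈ Finset.range m, ∑ i ∈ Finset.range d, (u i : ℝ) * (z ^ d ^ t) ^ (d - 1 - i)) *
        ∑' i : ℕ, α i * ((z ^ d ^ m)⁻¹) ^ (k + 1 + i)) ∧
    Filter.Tendsto
      (fun z : ℝ =>
        |g z - (∏ t ∈ Finset.range m, ∑ i ∈ Finset.range d,
            (u i : ℝ) * (z ^ d ^ t) ^ (d - 1 - i)) *
          (∑ i ∈ Finset.range k, (b i : ℝ) * (z ^ d ^ m) ^ i) /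
          (∑ j ∈ Finset.range (k + 1), (a j : ℝ) * (z ^ d ^ m) ^ j)| *
        z ^ (2 * (k * d ^ m)))
      Filter.atTop (nhds 0) := by
  have hdm : d ^ m ≠ 0 := by positivity
  have hremainder (z : ℝ) (hz : r < z) :
      (∑ j ∈ range (k + 1), (a j : ℝ) * (z ^ d ^ m) ^ j) * g z -
        partialProd d u m z * ∑ i ∈ range k, (b i : ℝ) * (z ^ d ^ m) ^ i =
      partialProd d u m z * ∑' i : ℕ, α i * ((z ^ d ^ m)⁻¹) ^ (k + 1 + i) := by
    rw [g_eq_partialProd_mul_g_pow hd hu0 hg (hr.trans_lt hz) m,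
      ← hser _ (hz.trans_le (le_self_pow₀ (by linarith) hdm))]
    ring
  exact ⟨hremainder, tendsto_abs_sub_div_mul_pow_of_remainder hdm hak (by linarith) hαgrow
    (fun z hz => abs_partialProd_mul_le (by omega) hz m) hremainder⟩

open Filter in
/-- Convergents generated by the functional equation.  Let `d ≥ 2`,
`P(z) = 1 + u_1 z + ⋯ + u_{d-1} z^{d-1}`, `g(z) = z^{-1}∏_{t≥0} P(z^{-d^t})` (so that
`g(z) = g(z^d)/P*(z)` with `P*(z) = z^{d-1}P(1/z)`), and let `p_k/q_k` be the `k`-th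
convergent of `g`, with `deg q_k = k` and `q_k(z) g(z) - p_k(z) = ∑_{i>k} α_{k,i} z^{-i}`
(the `α`'s having at most geometric growth).  Define `q_{k,m}(z) = q_k(z^{d^m})` and
`p_{k,m}(z) = ∏_{t<m} P*(z^{d^t}) · p_k(z^{d^m})`.  Then
`q_{k,m}(z) g(z) - p_{k,m}(z) = ∏_{t<m} P*(z^{d^t}) · ∑_{i>k} α_{k,i} z^{-d^m i}`;
in particular `p_{k,m}/q_{k,m}` is again a convergent of `g` (Legendre:
`|g(z) - p_{k,m}(z)/q_{k,m}(z)| = o(z^{-2·deg q_{k,m}})` as `z → ∞`). -/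
theorem functional_equation_generates_convergents
    (d k m : ℕ) (hd : 2 ≤ d) (hk : 1 ≤ k) (hm : 1 ≤ m)
    (u : ℕ → ℤ) (hu0 : u 0 = 1) (hud : ∀ i, d ≤ i → u i = 0)
    (g : ℝ → ℝ)
    (hg : ∀ z : ℝ, g z = z⁻¹ * ∏' t : ℕ, ∑ i ∈ Finset.range d, (u i : ℝ) * (z⁻¹ ^ (d ^ t)) ^ i)
    (a b : ℕ → ℤ) (hak : a k ≠ 0)
    (α : ℕ → ℝ) (C r : ℝ) (hC : 0 ≤ C) (hr : 1 ≤ r)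
    (hαgrow : ∀ i : ℕ, |α i| ≤ C * r ^ i)
    (hser : ∀ x : ℝ, r < x →
      (∑ j ∈ Finset.range (k + 1), (a j : ℝ) * x ^ j) * g x -
        (∑ i ∈ Finset.range k, (b i : ℝ) * x ^ i) =
      ∑' i : ℕ, α i * (x⁻¹) ^ (k + 1 + i)) :
    (∀ z : ℝ, r < z →
      (∑ j ∈ Finset.range (k + 1), (a j : ℝ) * (z ^ d ^ m) ^ j) * g z -
        (∏ t ∈ Finset.range m, ∑ i ∈ Finset.range d, (u i : ℝ) * (z ^ d ^ t) ^ (d - 1 - i)) *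
          (∑ i ∈ Finset.range k, (b i : ℝ) * (z ^ d ^ m) ^ i) =
      (∏ t ∈ Finset.range m, ∑ i ∈ Finset.range d, (u i : ℝ) * (z ^ d ^ t) ^ (d - 1 - i)) *
        ∑' i : ℕ, α i * ((z ^ d ^ m)⁻¹) ^ (k + 1 + i)) ∧
    Filter.Tendsto
      (fun z : ℝ =>
        |g z - (∏ t ∈ Finset.range m, ∑ i ∈ Finset.range d,
            (u i : ℝ) * (z ^ d ^ t) ^ (d - 1 - i)) *
          (∑ i ∈ Finset.range k, (b i : ℝ) * (z ^ d ^ m) ^ i) /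
          (∑ j ∈ Finset.range (k + 1), (a j : ℝ) * (z ^ d ^ m) ^ j)| *
        z ^ (2 * (k * d ^ m)))
      Filter.atTop (nhds 0) :=
  functional_equation_generates_convergents_general d k m hd u hu0 g hg a b hak α C r hr hαgrow hser
end
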